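/- For every t ∈ ℝ and every site k ∈ Fin n, exp(i t F) · a_k · exp(−i t F) = e^{−i t (ε_k − μ)} · a_k and exp(i t F) · a_kᴴ · exp(−i t F) = e^{i t (ε_k − μ)} · a_kᴴ; in particular each n_k, and hence every element of the commutative subalgebra generated by {n_k}, is invariant under the Heisenberg dynamics A ↦ exp(itF) A exp(−itF) generated by the free energy F. -/

import Mathlib

open Matrix

noncomputable section JW

/-- The operator algebra of `n` fermionic sites: `2^n × 2^n` complex matrices, with the
index set realized as `Fin n → Fin 2` (the tensor-product basis). -/
abbrev FermionAlg (n : ℕ) := Matrix (Fin n → Fin 2) (Fin n → Fin 2) ℂ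

/-- Jordan–Wigner annihilation operator at site `k`:
`a_k = σ₃^{⊗ k} ⊗ σ⁻ ⊗ 1₂^{⊗ (n−k−1)}`, with `σ⁻ = [[0,0],[1,0]]` and
`σ₃ = [[1,0],[0,−1]]`, written entrywise in the tensor-product basis
(the entry of a tensor product at `(v, w)` is the product of the entries of the factors). -/
def jwA (n : ℕ) (k : Fin n) : FermionAlg n :=
  Matrix.of fun v w => ∏ j : Fin n,
    if j < k then (if v j = w j then (-1 : ℂ) ^ (v j : ℕ) else 0)
    else if j = k then (if v j = 1 ∧ w j = 0 then 1 else 0)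
    else (if v j = w j then 1 else 0)

/-- The number operator `n_k = a_kᴴ a_k`. -/
def numOp (n : ℕ) (k : Fin n) : FermionAlg n := (jwA n k)ᴴ * jwA n k

/-- The grading unitary `G = ∏_k (1 − 2 n_k)`. -/
def grading (n : ℕ) : FermionAlg n :=
  (List.ofFn fun k : Fin n => (1 - 2 • numOp n k)).prod

/-- The free energy `F = Σ_k (ε_k − μ) n_k`. -/
def freeEnergy (n : ℕ) (ε : Fin n → ℝ) (μ : ℝ) : FermionAlg n :=
  ∑ k, ((ε k - μ : ℝ) : ℂ) • numOp n k

/-- The Gibbs state `ρ(A) = Tr(exp(−βF)·A)/Tr(exp(−βF))`. -/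
def gibbs (n : ℕ) (ε : Fin n → ℝ) (μ β : ℝ) (A : FermionAlg n) : ℂ :=
  ((NormedSpace.exp ((-(β : ℂ)) • freeEnergy n ε μ)) * A).trace /
    (NormedSpace.exp ((-(β : ℂ)) • freeEnergy n ε μ)).trace

end JW

/-!
In the occupation basis every `n_k` is diagonal (in this Jordan–Wigner convention the digit `0`
at site `k` means "occupied"), so `F` is the diagonal matrix of occupied energies `E v` and
`exp (z F) = diag (e^{z E v})`. Conjugating a matrix `A` by this diagonal multiplies its entry
`A v w` by `e^{z (E v - E w)}`. The entries of `a_k` sit at pairs `(v, w)` where `v` is `w` with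
site `k` emptied, so `E w - E v = ε_k - μ` on its support and `a_k` is just rescaled. The algebra
generated by the `n_k` consists of matrices commuting with the diagonal `exp (z F)`, hence is fixed.
-/

section DiagonalConjugation

variable {ι 𝔸 : Type*} [Fintype ι] [DecidableEq ι]

theorem Matrix.exp_mul_mul_exp_neg_of_commute [NormedRing 𝔸] [NormedAlgebra ℚ 𝔸]
    [CompleteSpace 𝔸] {X A : Matrix ι ι 𝔸} (h : Commute (NormedSpace.exp X) A) :
    NormedSpace.exp X * A * NormedSpace.exp (-X) = A := by
  rw [h.eq, mul_assoc, ← Matrix.exp_add_of_commute _ _ (Commute.neg_right (Commute.refl X)),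
    add_neg_cancel, NormedSpace.exp_zero, mul_one]

theorem Matrix.exp_smul_diagonal (z : ℂ) (d : ι → ℂ) :
    NormedSpace.exp (z • diagonal d) = diagonal fun i => Complex.exp (z * d i) := by
  rw [← diagonal_smul, exp_diagonal]
  congr 1
  funext i
  rw [Pi.coe_exp, Pi.smul_apply, smul_eq_mul, Complex.exp_eq_exp_ℂ]

theorem Matrix.exp_smul_diagonal_conj_of_support (z c : ℂ) (d : ι → ℂ) (A : Matrix ι ι ℂ)
    (hA : ∀ i j, A i j ≠ 0 → d j - d i = c) :
    NormedSpace.exp (z • diagonal d) * A * NormedSpace.exp ((-z) • diagonal d)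
      = Complex.exp (-(z * c)) • A := by
  ext i j
  rw [exp_smul_diagonal, exp_smul_diagonal, mul_diagonal, diagonal_mul, smul_apply, smul_eq_mul]
  by_cases hij : A i j = 0
  · simp [hij]
  · rw [mul_right_comm, ← Complex.exp_add, ← hA i j hij]
    ring_nf

end DiagonalConjugation

open ComplexConjugate

namespace JordanWigner

variable {n : ℕ}

def jwSign (k : Fin n) (v : Fin n → Fin 2) : ℂ :=
  ∏ j, if j < k then (-1 : ℂ) ^ (v j : ℕ) else 1

theorem conj_jwSign_mul_self (k : Fin n) (v : Fin n → Fin 2) :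
    conj (jwSign k v) * jwSign k v = 1 := by
  rw [jwSign, map_prod, ← Finset.prod_mul_distrib]
  refine Finset.prod_eq_one fun j _ => ?_
  split_ifs <;> simp [← mul_pow]

theorem jwA_apply (k : Fin n) (v w : Fin n → Fin 2) :
    jwA n k v w = if w k = 0 ∧ v = Function.update w k 1 then jwSign k v else 0 := by
  simp only [jwA, of_apply, jwSign]
  split_ifs with h
  · obtain ⟨hw, rfl⟩ := h
    refine Finset.prod_congr rfl fun j _ => ?_
    rcases lt_trichotomy j k with hjk | rfl | hjk
    · simp [hjk, hjk.ne]
    · simp [hw]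
    · simp [hjk.ne', not_lt.2 hjk.le]
  · refine Finset.prod_eq_zero_iff.2 ?_
    by_cases hk : w k = 0 ∧ v k = 1
    · obtain ⟨j, hjk, hj⟩ : ∃ j ≠ k, v j ≠ w j := by
        simpa [Function.eq_update_iff, hk] using h
      refine ⟨j, Finset.mem_univ _, ?_⟩
      rcases hjk.lt_or_gt with hlt | hgt
      · simp [hlt, hj]
      · simp [hgt.ne', not_lt.2 hgt.le, hj]
    · exact ⟨k, Finset.mem_univ _, by simp only [lt_irrefl, if_false, if_true]; grind⟩

theorem numOp_eq_diagonal (k : Fin n) :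
    numOp n k = diagonal fun v => if v k = 0 then 1 else 0 := by
  ext v w
  simp only [numOp, mul_apply, conjTranspose_apply, jwA_apply]
  rw [Finset.sum_eq_single (Function.update w k 1) (fun u _ hu => by simp [hu]) (by simp)]
  by_cases hvw : v = w
  · subst hvw
    by_cases hv : v k = 0 <;> simp [hv, conj_jwSign_mul_self]
  · have hne : w k = 0 → v k = 0 → Function.update w k 1 ≠ Function.update v k 1 := by
      intro hw hv h
      refine hvw ?_
      calc v = Function.update (Function.update v k 1) k 0 := by
            rw [Function.update_idem, ← hv, Function.update_eq_self]
        _ = w := by rw [← h, Function.update_idem, ← hw, Function.update_eq_self]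
    simp +contextual [diagonal_apply_ne _ hvw, hne]

def occupiedEnergy (ε : Fin n → ℝ) (μ : ℝ) (v : Fin n → Fin 2) : ℂ :=
  ∑ k, if v k = 0 then ((ε k - μ : ℝ) : ℂ) else 0

theorem freeEnergy_eq_diagonal (ε : Fin n → ℝ) (μ : ℝ) :
    freeEnergy n ε μ = diagonal (occupiedEnergy ε μ) := by
  ext v w
  by_cases hvw : v = w
  · subst hvw
    simp [freeEnergy, numOp_eq_diagonal, Matrix.sum_apply, occupiedEnergy]
  · simp [freeEnergy, numOp_eq_diagonal, Matrix.sum_apply, diagonal_apply_ne _ hvw]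

theorem occupiedEnergy_sub_update (ε : Fin n → ℝ) (μ : ℝ) {k : Fin n} {w : Fin n → Fin 2}
    (hw : w k = 0) :
    occupiedEnergy ε μ w - occupiedEnergy ε μ (Function.update w k 1) = ε k - μ := by
  rw [occupiedEnergy, occupiedEnergy, ← Finset.sum_sub_distrib,
    Finset.sum_eq_single k (fun j _ hj => by simp [hj]) (by simp)]
  simp [hw]

theorem occupiedEnergy_sub_of_jwA_ne_zero (ε : Fin n → ℝ) (μ : ℝ) {k : Fin n}
    {v w : Fin n → Fin 2} (h : jwA n k v w ≠ 0) :
    occupiedEnergy ε μ w - occupiedEnergy ε μ v = ε k - μ := by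
  rw [jwA_apply, ne_eq, ite_eq_right_iff, Classical.not_imp] at h
  obtain ⟨⟨hw, rfl⟩, -⟩ := h
  exact occupiedEnergy_sub_update ε μ hw

theorem occupiedEnergy_sub_of_conjTranspose_jwA_ne_zero (ε : Fin n → ℝ) (μ : ℝ) {k : Fin n}
    {v w : Fin n → Fin 2} (h : (jwA n k)ᴴ v w ≠ 0) :
    occupiedEnergy ε μ w - occupiedEnergy ε μ v = -(ε k - μ) := by
  rw [conjTranspose_apply, star_ne_zero] at h
  rw [← occupiedEnergy_sub_of_jwA_ne_zero ε μ h, neg_sub]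

theorem commute_exp_smul_freeEnergy_of_mem_adjoin (ε : Fin n → ℝ) (μ : ℝ) (z : ℂ)
    {A : FermionAlg n} (hA : A ∈ Algebra.adjoin ℂ (Set.range (numOp n))) :
    Commute (NormedSpace.exp (z • freeEnergy n ε μ)) A := by
  have hle : Algebra.adjoin ℂ (Set.range (numOp n))
      ≤ Subalgebra.centralizer ℂ {NormedSpace.exp (z • freeEnergy n ε μ)} := by
    refine Algebra.adjoin_le (Set.range_subset_iff.2 fun k => ?_)
    simp only [SetLike.mem_coe, Subalgebra.mem_centralizer_iff, Set.mem_singleton_iff, forall_eq]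
    rw [freeEnergy_eq_diagonal, exp_smul_diagonal, numOp_eq_diagonal]
    exact (commute_diagonal _ _).eq
  exact (Subalgebra.mem_centralizer_iff ℂ).1 (hle hA) _ rfl

end JordanWigner

open JordanWigner

theorem heisenberg_dynamics_on_fermions_general
    (n : ℕ) (μ : ℝ) (ε : Fin n → ℝ) :
    (∀ t : ℝ, ∀ k : Fin n,
      NormedSpace.exp ((Complex.I * t) • freeEnergy n ε μ) * jwA n k *
        NormedSpace.exp ((-(Complex.I * t)) • freeEnergy n ε μ)
      = Complex.exp (-(Complex.I * t * ((ε k : ℂ) - μ))) • jwA n k) ∧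
    (∀ t : ℝ, ∀ k : Fin n,
      NormedSpace.exp ((Complex.I * t) • freeEnergy n ε μ) * (jwA n k)ᴴ *
        NormedSpace.exp ((-(Complex.I * t)) • freeEnergy n ε μ)
      = Complex.exp (Complex.I * t * ((ε k : ℂ) - μ)) • (jwA n k)ᴴ) ∧
    (∀ t : ℝ, ∀ k : Fin n,
      NormedSpace.exp ((Complex.I * t) • freeEnergy n ε μ) * numOp n k *
        NormedSpace.exp ((-(Complex.I * t)) • freeEnergy n ε μ) = numOp n k) ∧
    (∀ t : ℝ, ∀ A ∈ Algebra.adjoin ℂ (Set.range (numOp n)),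
      NormedSpace.exp ((Complex.I * t) • freeEnergy n ε μ) * A *
        NormedSpace.exp ((-(Complex.I * t)) • freeEnergy n ε μ) = A) := by
  have invariant : ∀ t : ℝ, ∀ A ∈ Algebra.adjoin ℂ (Set.range (numOp n)),
      NormedSpace.exp ((Complex.I * t) • freeEnergy n ε μ) * A *
        NormedSpace.exp ((-(Complex.I * t)) • freeEnergy n ε μ) = A := fun t A hA => by
    rw [neg_smul]
    exact exp_mul_mul_exp_neg_of_commute (commute_exp_smul_freeEnergy_of_mem_adjoin ε μ _ hA)
  refine ⟨fun t k => ?_, fun t k => ?_,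
    fun t k => invariant t _ (Algebra.subset_adjoin ⟨k, rfl⟩), invariant⟩
  · rw [freeEnergy_eq_diagonal]
    exact exp_smul_diagonal_conj_of_support _ _ _ _ fun _ _ =>
      occupiedEnergy_sub_of_jwA_ne_zero ε μ
  · rw [freeEnergy_eq_diagonal, exp_smul_diagonal_conj_of_support _ (-((ε k : ℂ) - μ))
      (occupiedEnergy ε μ) _ fun _ _ => occupiedEnergy_sub_of_conjTranspose_jwA_ne_zero ε μ,
      mul_neg, neg_neg]

/-- For every `t ∈ ℝ` and every site `k`,
`exp(itF) a_k exp(−itF) = e^{−it(ε_k − μ)} a_k` and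
`exp(itF) a_kᴴ exp(−itF) = e^{it(ε_k − μ)} a_kᴴ`; in particular every `n_k`, and hence
every element of the commutative subalgebra generated by the `n_k`, is invariant under
the Heisenberg dynamics `A ↦ exp(itF) A exp(−itF)` generated by the free energy `F`. -/
theorem heisenberg_dynamics_on_fermions
    (n : ℕ) (hn : 1 ≤ n) (μ : ℝ) (ε : Fin n → ℝ) :
    (∀ t : ℝ, ∀ k : Fin n,
      NormedSpace.exp ((Complex.I * t) • freeEnergy n ε μ) * jwA n k *
        NormedSpace.exp ((-(Complex.I * t)) • freeEnergy n ε μ)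
      = Complex.exp (-(Complex.I * t * ((ε k : ℂ) - μ))) • jwA n k) ∧
    (∀ t : ℝ, ∀ k : Fin n,
      NormedSpace.exp ((Complex.I * t) • freeEnergy n ε μ) * (jwA n k)ᴴ *
        NormedSpace.exp ((-(Complex.I * t)) • freeEnergy n ε μ)
      = Complex.exp (Complex.I * t * ((ε k : ℂ) - μ)) • (jwA n k)ᴴ) ∧
    (∀ t : ℝ, ∀ k : Fin n,
      NormedSpace.exp ((Complex.I * t) • freeEnergy n ε μ) * numOp n k *
        NormedSpace.exp ((-(Complex.I * t)) • freeEnergy n ε μ) = numOp n k) ∧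
    (∀ t : ℝ, ∀ A ∈ Algebra.adjoin ℂ (Set.range (numOp n)),
      NormedSpace.exp ((Complex.I * t) • freeEnergy n ε μ) * A *
        NormedSpace.exp ((-(Complex.I * t)) • freeEnergy n ε μ) = A) :=
  heisenberg_dynamics_on_fermions_general n μ ε
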